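/- arXiv:1905.06138 — 2 statements merged into one kernel-verified Lean document; each statement's English description precedes it below -/
import Mathlib

section
/- Let α be an irrational real number with 0 < α < 1/2. For every k ≥ 0 there exists a nonempty factor of slope α whose minimum abelian period equals q_k. -/
open scoped Classical

noncomputable section

namespace SturmianAbelian

/-- Complete quotients: `cq α t = α_t` for `t ≥ 1`; `cq α 0 = α` is a dummy value chosen so that
`cq α 1 = 1/(α - ⌊α⌋) = 1/α` when `0 < α < 1`. -/
noncomputable def cq (α : ℝ) : ℕ → ℝ
  | 0 => α
  | t + 1 => (cq α t - ⌊cq α t⌋)⁻¹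

/-- Partial quotients: `pq α t = a_t = ⌊α_t⌋` for `t ≥ 1`. -/
noncomputable def pq (α : ℝ) (t : ℕ) : ℕ := (⌊cq α t⌋).toNat

/-- Denominators of the convergents of `α`: `qd α k = q_k`, with
`q_0 = 1`, `q_1 = a_1`, `q_k = a_k q_{k-1} + q_{k-2}`. -/
noncomputable def qd (α : ℝ) : ℕ → ℕ
  | 0 => 1
  | 1 => pq α 1
  | (k + 2) => pq α (k + 2) * qd α (k + 1) + qd α k

/-- Distance from `x` to the nearest integer, `‖x‖`. -/
noncomputable def nint (x : ℝ) : ℝ := min (Int.fract x) (1 - Int.fract x)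

/-- The representative of `x` modulo 1 lying in `(0, 1]`. -/
noncomputable def fract' (x : ℝ) : ℝ := 1 - Int.fract (-x)

/-- The Sturmian word of slope `α` and intercept `ρ` in the lower convention:
`s n = 1` iff the fractional part of `ρ + nα` lies in `[1 - α, 1)`. -/
noncomputable def lowerWord (α ρ : ℝ) (n : ℕ) : Bool :=
  if 1 - α ≤ Int.fract (ρ + (n : ℝ) * α) then true else false

/-- The Sturmian word of slope `α` and intercept `ρ` in the upper convention:
`s n = 1` iff the representative of `ρ + nα` modulo 1 in `(0,1]` lies in `(1 - α, 1]`. -/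
noncomputable def upperWord (α ρ : ℝ) (n : ℕ) : Bool :=
  if 1 - α < fract' (ρ + (n : ℝ) * α) then true else false

/-- `s` is a Sturmian word of slope `α` (either convention, some intercept `ρ ∈ [0,1)`). -/
def IsSturmian (α : ℝ) (s : ℕ → Bool) : Prop :=
  ∃ ρ : ℝ, 0 ≤ ρ ∧ ρ < 1 ∧ (s = lowerWord α ρ ∨ s = upperWord α ρ)

/-- `w` is a (finite, contiguous) factor of the infinite word `s`. -/
def FactorOf (s : ℕ → Bool) (w : List Bool) : Prop :=
  ∃ i : ℕ, w = (List.range w.length).map fun j => s (i + j)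

/-- `w` is a factor of slope `α`. -/
def IsFactor (α : ℝ) (w : List Bool) : Prop :=
  ∃ s : ℕ → Bool, IsSturmian α s ∧ FactorOf s w

/-- Abelian equivalence: same length and the same number of occurrences of the letter 1. -/
def AbEq (u v : List Bool) : Prop :=
  u.length = v.length ∧ u.count true = v.count true

/-- `u` is an abelian power of period `m` and exponent `e`: a concatenation of `e ≥ 2` pairwise
abelian equivalent blocks, each of length `m ≥ 1`. -/
def IsAbelianPower (m e : ℕ) (u : List Bool) : Prop :=
  1 ≤ m ∧ 2 ≤ e ∧ u.length = e * m ∧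
  ∀ i < e, ∀ j < e, AbEq ((u.drop (i * m)).take m) ((u.drop (j * m)).take m)

/-- `w` has abelian period `m`: `w` is a contiguous factor of some abelian power of period `m`. -/
def HasAbPeriod (w : List Bool) (m : ℕ) : Prop :=
  ∃ e u, IsAbelianPower m e u ∧ w <:+: u

/-- `m` is the minimum abelian period of `w`. -/
def MinAbPeriod (w : List Bool) (m : ℕ) : Prop :=
  IsLeast {p : ℕ | HasAbPeriod w p} m

/-- `M(α) = {t·q_k : k ≥ 0, 1 ≤ t ≤ a_{k+1}}`. -/
def Mset (α : ℝ) : Set ℕ :=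
  {m | ∃ k t : ℕ, 1 ≤ t ∧ t ≤ pq α (k + 1) ∧ m = t * qd α k}

/-- The set of denominators of convergents and semiconvergents of `α`. -/
def Qsc (α : ℝ) : Set ℕ :=
  {m | (∃ k : ℕ, m = qd α k) ∨
    ∃ k l : ℕ, 1 ≤ k ∧ 1 ≤ l ∧ l < pq α (k + 1) ∧ m = l * qd α k + qd α (k - 1)}

/-- The singular factor of length `q_k`: the unique factor of slope `α` of length `q_k` that is not
abelian equivalent to any other factor of slope `α` of the same length. -/
def IsSingular (α : ℝ) (k : ℕ) (s : List Bool) : Prop :=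
  IsFactor α s ∧ s.length = qd α k ∧
  ∀ u : List Bool, IsFactor α u → u.length = qd α k → u ≠ s → ¬ AbEq u s

/-- `v` occurs in `u` at position `i`. -/
def OccursAt (v u : List Bool) (i : ℕ) : Prop :=
  i + v.length ≤ u.length ∧ (u.drop i).take v.length = v

/-- `u` is a complete first return to `v`: `v` is a prefix and a suffix of `u` and `v` has exactly
two occurrences in `u`. -/
def CompleteFirstReturn (v u : List Bool) : Prop :=
  v <+: u ∧ v <:+ u ∧ {i | OccursAt v u i}.ncard = 2

/-- `u` is a complete first return to `v` in the same phase. -/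
def CFRSamePhase (v u : List Bool) : Prop :=
  v <+: u ∧ v <:+ u ∧ u.length % v.length = 0 ∧
  2 ≤ {i | OccursAt v u i}.ncard ∧
  ∀ i : ℕ, OccursAt v u i → i % v.length = 0 → i = 0 ∨ i = u.length - v.length

/-!
Choose the intercept `ρ` so that the points `ρ + j (q_k α - p_k)`, `0 ≤ j ≤ q_{k+1}`, stay in
`[0, 1)`; this is possible because `q_{k+1} |q_k α - p_k| < 1`. The number of ones in the factor
of length `m` at position `n` of the lower word is `⌊ρ + (n + m) α⌋ - ⌊ρ + n α⌋`, so the prefix of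
length `q_{k+1} q_k` splits into `q_{k+1}` blocks of length `q_k` with `p_k` ones each, and `q_k`
is an abelian period.

Conversely, an abelian period `p` of a factor of length `L` yields at least `(L + 2 - 2p) / p`
consecutive blocks of length `p` with a common number `c` of ones, whence
`(L + 2 - 2p) |p α - c| < p`. For `0 < p < q_k` write `p = x q_{k-1} + y q_k`: either `y = 0` and
`|p α - c| = x |q_{k-1} α - p_{k-1}|`, or `x y < 0` and `|p α - c|` exceeds the sum of the errors
of the convergents `k - 1` and `k`. Both lower bounds contradict the inequality when
`L = q_{k+1} q_k`.
-/

section ContinuedFraction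

variable {α : ℝ}

lemma irrational_cq (hirr : Irrational α) : ∀ t, Irrational (cq α t)
  | 0 => hirr
  | t + 1 => ((irrational_cq hirr t).sub_intCast _).inv

lemma cq_succ (t : ℕ) : cq α (t + 1) = (Int.fract (cq α t))⁻¹ := rfl

lemma one_lt_cq_succ (hirr : Irrational α) (t : ℕ) : 1 < cq α (t + 1) := by
  have hpos : 0 < Int.fract (cq α t) := Int.fract_pos.mpr ((irrational_cq hirr t).ne_int _)
  rw [cq_succ]
  exact (one_lt_inv₀ hpos).mpr (Int.fract_lt_one _)

lemma cq_one (h0 : 0 < α) (h1 : α < 1) : cq α 1 = α⁻¹ := by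
  rw [cq_succ, cq, Int.fract_eq_self.mpr ⟨h0.le, h1⟩]

lemma pq_succ_cast (hirr : Irrational α) (t : ℕ) : (pq α (t + 1) : ℤ) = ⌊cq α (t + 1)⌋ :=
  Int.toNat_of_nonneg (Int.floor_nonneg.mpr (zero_le_one.trans (one_lt_cq_succ hirr t).le))

lemma one_le_pq_succ (hirr : Irrational α) (t : ℕ) : 1 ≤ pq α (t + 1) := by
  have : (1 : ℤ) ≤ ⌊cq α (t + 1)⌋ := Int.le_floor.mpr (by exact_mod_cast (one_lt_cq_succ hirr t).le)
  have := pq_succ_cast hirr t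
  omega

lemma two_le_pq_one (h0 : 0 < α) (h2 : α < 1 / 2) : 2 ≤ pq α 1 := by
  have h2inv : (2 : ℝ) ≤ α⁻¹ := by rw [le_inv_comm₀ two_pos h0]; linarith
  have : (2 : ℤ) ≤ ⌊cq α 1⌋ := by
    rw [Int.le_floor, cq_one h0 (by linarith)]
    exact_mod_cast h2inv
  unfold pq
  omega

lemma cq_succ_eq_pq_add_inv (hirr : Irrational α) (t : ℕ) :
    cq α (t + 1) = pq α (t + 1) + (cq α (t + 2))⁻¹ := by
  have hpq : (pq α (t + 1) : ℝ) = ⌊cq α (t + 1)⌋ := by exact_mod_cast pq_succ_cast hirr t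
  rw [cq_succ (t + 1), inv_inv, hpq, Int.floor_add_fract]

lemma qd_succ_succ (j : ℕ) : qd α (j + 2) = pq α (j + 2) * qd α (j + 1) + qd α j := rfl

lemma qd_succ_add_qd_le (hirr : Irrational α) (j : ℕ) :
    qd α (j + 1) + qd α j ≤ qd α (j + 2) := by
  rw [qd_succ_succ]
  have : qd α (j + 1) ≤ pq α (j + 2) * qd α (j + 1) :=
    Nat.le_mul_of_pos_left _ (one_le_pq_succ hirr (j + 1))
  omega

lemma qd_pos (hirr : Irrational α) : ∀ j, 0 < qd α j
  | 0 => Nat.one_pos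
  | 1 => one_le_pq_succ hirr 0
  | j + 2 => (qd_pos hirr j).trans_le ((Nat.le_add_left _ _).trans (qd_succ_add_qd_le hirr j))

lemma qd_lt_qd_succ (hirr : Irrational α) (h0 : 0 < α) (h2 : α < 1 / 2) :
    ∀ j, qd α j < qd α (j + 1)
  | 0 => two_le_pq_one h0 h2
  | j + 1 => Nat.lt_of_lt_of_le (Nat.lt_add_of_pos_right (qd_pos hirr j))
      (qd_succ_add_qd_le hirr j)

end ContinuedFraction

lemma abs_add_eq_add_abs_of_mul_nonneg {a b : ℝ} (h : 0 ≤ a * b) : |a + b| = |a| + |b| :=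
  (abs_add_eq_add_abs_iff a b).mpr (mul_nonneg_iff.mp h)

section ConvergentError

variable {α : ℝ}

-- numerators of the convergents when `0 < α < 1`, so that `p_0 = ⌊α⌋ = 0`
noncomputable def pn (α : ℝ) : ℕ → ℤ
  | 0 => 0
  | 1 => 1
  | (k + 2) => pq α (k + 2) * pn α (k + 1) + pn α k

noncomputable def err (α : ℝ) (j : ℕ) : ℝ := qd α j * α - pn α j

lemma err_succ_succ (j : ℕ) : err α (j + 2) = pq α (j + 2) * err α (j + 1) + err α j := by
  simp only [err, qd_succ_succ, pn]
  push_cast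
  ring

lemma err_succ_mul_cq (hirr : Irrational α) (h0 : 0 < α) (h1 : α < 1) :
    ∀ j, err α (j + 1) * cq α (j + 2) = -err α j
  | 0 => by
    have hcq2 : cq α 2 ≠ 0 := (zero_lt_one.trans (one_lt_cq_succ hirr 1)).ne'
    have hcq1 : α⁻¹ = pq α 1 + (cq α 2)⁻¹ := cq_one h0 h1 ▸ cq_succ_eq_pq_add_inv hirr 0
    simp only [err, qd, pn]
    field_simp at hcq1 ⊢
    push_cast
    linear_combination (-1 : ℝ) * hcq1
  | j + 1 => by
    have hcq3 : cq α (j + 3) ≠ 0 := (zero_lt_one.trans (one_lt_cq_succ hirr (j + 2))).ne'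
    have hrec := err_succ_mul_cq hirr h0 h1 j
    rw [err_succ_succ, ← neg_neg (err α j), ← hrec, cq_succ_eq_pq_add_inv hirr (j + 1)]
    field_simp
    ring

lemma err_ne_zero (hirr : Irrational α) (h0 : 0 < α) (h1 : α < 1) : ∀ j, err α j ≠ 0
  | 0 => by simpa [err, qd, pn] using h0.ne'
  | j + 1 => fun h => err_ne_zero hirr h0 h1 j (by
      rw [← neg_eq_zero, ← err_succ_mul_cq hirr h0 h1 j, h, zero_mul])

lemma err_mul_err_succ_neg (hirr : Irrational α) (h0 : 0 < α) (h1 : α < 1) (j : ℕ) :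
    err α j * err α (j + 1) < 0 := by
  rw [← neg_neg (err α j), ← err_succ_mul_cq hirr h0 h1 j]
  have := one_lt_cq_succ hirr (j + 1)
  have := pow_pos (abs_pos.mpr (err_ne_zero hirr h0 h1 (j + 1))) 2
  rw [sq_abs] at this
  nlinarith

lemma abs_err_succ_lt (hirr : Irrational α) (h0 : 0 < α) (h1 : α < 1) (j : ℕ) :
    |err α (j + 1)| < |err α j| := by
  rw [← abs_neg (err α j), ← err_succ_mul_cq hirr h0 h1 j, abs_mul,
    abs_of_pos (zero_lt_one.trans (one_lt_cq_succ hirr (j + 1)))]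
  exact lt_mul_of_one_lt_right (abs_pos.mpr (err_ne_zero hirr h0 h1 (j + 1)))
    (one_lt_cq_succ hirr (j + 1))

lemma qd_mul_pn_succ_sub (j : ℕ) :
    (qd α j : ℤ) * pn α (j + 1) - qd α (j + 1) * pn α j = (-1) ^ j := by
  induction j with
  | zero => simp [qd, pn]
  | succ j ih =>
    simp only [qd_succ_succ, pn]
    push_cast
    linear_combination (-1 : ℤ) * ih

lemma qd_succ_mul_abs_err_add (hirr : Irrational α) (h0 : 0 < α) (h1 : α < 1) (j : ℕ) :
    qd α (j + 1) * |err α j| + qd α j * |err α (j + 1)| = 1 := by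
  have hdet : (qd α (j + 1) * err α j + -(qd α j * err α (j + 1)) : ℝ) = (-1) ^ j := by
    simp only [err]
    linear_combination (by exact_mod_cast qd_mul_pn_succ_sub j :
      ((qd α j : ℤ) * pn α (j + 1) - qd α (j + 1) * pn α j : ℝ) = (-1) ^ j)
  have hsign : 0 ≤ qd α (j + 1) * err α j * -(qd α j * err α (j + 1)) := by
    have := err_mul_err_succ_neg hirr h0 h1 j
    have : (0 : ℝ) ≤ qd α (j + 1) * qd α j := by positivity
    nlinarith
  have := abs_add_eq_add_abs_of_mul_nonneg hsign
  rw [hdet, abs_pow, abs_neg, abs_one, one_pow, abs_neg, abs_mul, abs_mul,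
    Nat.abs_cast, Nat.abs_cast] at this
  exact this.symm

lemma qd_succ_mul_abs_err_lt_one (hirr : Irrational α) (h0 : 0 < α) (h1 : α < 1) (j : ℕ) :
    qd α (j + 1) * |err α j| < 1 := by
  have := qd_succ_mul_abs_err_add hirr h0 h1 j
  have : (0 : ℝ) < qd α j * |err α (j + 1)| :=
    mul_pos (by exact_mod_cast qd_pos hirr j) (abs_pos.mpr (err_ne_zero hirr h0 h1 (j + 1)))
  linarith

end ConvergentError

section BestApproximation

variable {α : ℝ}

lemma exists_eq_qd_comb_and_eq_pn_comb (j : ℕ) (m c : ℤ) :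
    ∃ x y : ℤ, m = x * qd α j + y * qd α (j + 1) ∧ c = x * pn α j + y * pn α (j + 1) := by
  have hdet := qd_mul_pn_succ_sub (α := α) j
  have hsq : ((-1 : ℤ) ^ j) ^ 2 = 1 := by rw [← pow_mul, mul_comm, pow_mul]; simp
  refine ⟨(-1) ^ j * (m * pn α (j + 1) - c * qd α (j + 1)),
    (-1) ^ j * (c * qd α j - m * pn α j), ?_, ?_⟩
  · linear_combination (-m * (-1) ^ j) * hdet - m * hsq
  · linear_combination (-c * (-1) ^ j) * hdet - c * hsq

lemma eq_mul_qd_or_abs_err_add_le (hirr : Irrational α) (h0 : 0 < α) (h1 : α < 1) {j m : ℕ}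
    (c : ℤ) (hm : 0 < m) (hmq : m < qd α (j + 1)) :
    (∃ x : ℕ, m = x * qd α j ∧ |m * α - c| = x * |err α j|) ∨
      |err α j| + |err α (j + 1)| ≤ |m * α - c| := by
  obtain ⟨x, y, hmxy, hcxy⟩ := exists_eq_qd_comb_and_eq_pn_comb j m c
  have hval : (m : ℝ) * α - c = x * err α j + y * err α (j + 1) := by
    rw [show (m : ℝ) = (m : ℤ) by norm_cast, hmxy, hcxy]
    push_cast [err]
    ring
  have hqj : (0 : ℤ) < qd α j := by exact_mod_cast qd_pos hirr j
  rcases eq_or_ne y 0 with rfl | hy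
  · left
    obtain ⟨x, rfl⟩ := Int.eq_ofNat_of_zero_le (show 0 ≤ x by nlinarith)
    refine ⟨x, by zify; simpa using hmxy, ?_⟩
    rw [hval, Int.cast_zero, zero_mul, add_zero, abs_mul, Int.cast_natCast, Nat.abs_cast]
  · right
    have hxy : x * y < 0 := by
      rcases hy.lt_or_gt with hy | hy
      · have : 0 < x * qd α j := by nlinarith
        nlinarith [pos_of_mul_pos_left this hqj.le]
      · have : x * qd α j < 0 := by nlinarith
        nlinarith [neg_of_mul_neg_left this hqj.le]
    have hsame : 0 ≤ x * err α j * (y * err α (j + 1)) := by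
      have hxyR : (x * y : ℝ) < 0 := by exact_mod_cast hxy
      nlinarith [err_mul_err_succ_neg hirr h0 h1 j]
    have hx1 : (1 : ℝ) ≤ |(x : ℝ)| := by exact_mod_cast Int.one_le_abs (left_ne_zero_of_mul hxy.ne)
    have hy1 : (1 : ℝ) ≤ |(y : ℝ)| := by exact_mod_cast Int.one_le_abs hy
    rw [hval, abs_add_eq_add_abs_of_mul_nonneg hsame, abs_mul, abs_mul]
    gcongr
    · exact le_mul_of_one_le_left (abs_nonneg _) hx1
    · exact le_mul_of_one_le_left (abs_nonneg _) hy1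

lemma le_mul_abs_sub (hirr : Irrational α) (h0 : 0 < α) (h2 : α < 1 / 2) {k m : ℕ} (c : ℤ)
    (hm : 0 < m) (hmq : m < qd α (k + 1)) :
    (m : ℝ) ≤ (qd α (k + 2) * qd α (k + 1) + 2 - 2 * m) * |m * α - c| := by
  have h1 : α < 1 := by linarith
  have hq : (1 : ℝ) ≤ qd α k := by exact_mod_cast qd_pos hirr k
  have hqQ : (qd α k + 1 : ℝ) ≤ qd α (k + 1) := by exact_mod_cast qd_lt_qd_succ hirr h0 h2 k
  have hQQ' : (qd α (k + 1) + qd α k : ℝ) ≤ qd α (k + 2) := by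
    exact_mod_cast qd_succ_add_qd_le hirr k
  have hmQ : (m + 1 : ℝ) ≤ qd α (k + 1) := by exact_mod_cast hmq
  have hm1 : (1 : ℝ) ≤ m := by exact_mod_cast hm
  have hB' : 0 < |err α (k + 1)| := abs_pos.mpr (err_ne_zero hirr h0 h1 (k + 1))
  have hBB' := abs_err_succ_lt hirr h0 h1 k
  have hid := qd_succ_mul_abs_err_add hirr h0 h1 k
  set C : ℝ := qd α (k + 2) * qd α (k + 1) + 2 - 2 * m with hC_def
  rcases eq_mul_qd_or_abs_err_add_le hirr h0 h1 c hm hmq with ⟨x, hmx, hD⟩ | hD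
  · have hB : 1 < (qd α (k + 1) + qd α k) * |err α k| := by nlinarith
    have hC : (qd α k : ℝ) * (qd α (k + 1) + qd α k) ≤ C := by
      have : (m : ℝ) = x * qd α k := by exact_mod_cast hmx
      have hx : (1 : ℝ) ≤ x := by
        exact_mod_cast Nat.pos_of_ne_zero (by rintro rfl; omega)
      nlinarith
    have hqC : (qd α k : ℝ) ≤ C * |err α k| := by
      nlinarith [mul_le_mul_of_nonneg_right hC (abs_nonneg (err α k))]
    rw [hD, hmx]
    push_cast
    calc (x * qd α k : ℝ) ≤ x * (C * |err α k|) := by gcongr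
      _ = C * (x * |err α k|) := by ring
  · have hB : 1 < qd α (k + 1) * (|err α k| + |err α (k + 1)|) := by nlinarith
    have hC : (m : ℝ) * qd α (k + 1) ≤ C := by nlinarith
    calc (m : ℝ) ≤ m * qd α (k + 1) * (|err α k| + |err α (k + 1)|) := by nlinarith
      _ ≤ C * (|err α k| + |err α (k + 1)|) := by gcongr
      _ ≤ C * |m * α - c| := by gcongr; nlinarith

end BestApproximation

section Words

def segment (s : ℕ → Bool) (d n : ℕ) : List Bool := (List.range n).map fun j => s (d + j)

variable {s : ℕ → Bool}

@[simp]
lemma length_segment (d n : ℕ) : (segment s d n).length = n := by simp [segment]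

lemma factorOf_segment (d n : ℕ) : FactorOf s (segment s d n) := ⟨d, by rw [length_segment]; rfl⟩

lemma segment_add (d m n : ℕ) : segment s d (m + n) = segment s d m ++ segment s (d + m) n := by
  simp [segment, List.range_add, add_assoc]

lemma take_drop_segment {d i n L : ℕ} (h : i + n ≤ L) :
    ((segment s d L).drop i).take n = segment s (d + i) n := by
  apply List.ext_getElem
  · simp only [List.length_take, List.length_drop, length_segment, inf_eq_left]; omega
  · intro j _ _
    simp [segment, add_assoc]

lemma HasAbPeriod.pos {w : List Bool} {p : ℕ} (h : HasAbPeriod w p) : 0 < p := by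
  obtain ⟨_, _, ⟨hp, -⟩, -⟩ := h
  exact hp

lemma HasAbPeriod.exists_phase {w : List Bool} {p : ℕ} (h : HasAbPeriod w p) :
    ∃ d < p, ∃ c, ∀ j, d + (j + 1) * p ≤ w.length →
      ((w.drop (d + j * p)).take p).count true = c := by
  obtain ⟨e, _, ⟨hp, he, hlen, hblk⟩, s, t, rfl⟩ := h
  -- the blocks of `s ++ w ++ t` start at the multiples of `p`; the first one inside `w`
  -- starts at `b * p = s.length + d`
  have hdiv := Nat.div_add_mod' (s.length + p - 1) p
  have hmod := Nat.mod_lt (s.length + p - 1) hp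
  set b := (s.length + p - 1) / p
  refine ⟨b * p - s.length, by omega, ((s ++ w ++ t).take p).count true, fun j hj => ?_⟩
  rw [add_mul] at hj
  have hj_lt : b + j < e := by
    simp only [List.length_append] at hlen
    have : (b + j + 1) * p ≤ e * p := by rw [add_mul, add_mul]; omega
    exact Nat.lt_of_succ_le (Nat.le_of_mul_le_mul_right this hp)
  have hblock : (w.drop (b * p - s.length + j * p)).take p =
      ((s ++ w ++ t).drop ((b + j) * p)).take p := by
    rw [show (b + j) * p = s.length + (b * p - s.length + j * p) by rw [add_mul]; omega,
      List.append_assoc, List.drop_length_add_append, List.drop_append,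
      List.take_append_of_le_length (by simp only [List.length_drop]; omega)]
  rw [hblock]
  simpa using (hblk (b + j) hj_lt 0 (by omega : 0 < e)).2

end Words

section LowerWord

variable {α : ℝ}

lemma floor_succ_eq_add_lowerWord (h0 : 0 ≤ α) (h1 : α < 1) (ρ : ℝ) (n : ℕ) :
    ⌊ρ + ((n + 1 : ℕ) : ℝ) * α⌋ = ⌊ρ + n * α⌋ + (lowerWord α ρ n).toNat := by
  have hx : ρ + ((n + 1 : ℕ) : ℝ) * α = Int.fract (ρ + n * α) + α + ⌊ρ + n * α⌋ := by
    rw [Int.fract]; push_cast; ring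
  have := Int.fract_nonneg (ρ + n * α)
  have := Int.fract_lt_one (ρ + n * α)
  rw [hx, Int.floor_add_intCast, add_comm, add_right_inj, lowerWord]
  split_ifs with h <;>
    · rw [Int.floor_eq_iff]
      push_cast [Bool.toNat_true, Bool.toNat_false]
      constructor <;> linarith

lemma count_segment_lowerWord (h0 : 0 ≤ α) (h1 : α < 1) (ρ : ℝ) (d n : ℕ) :
    ((segment (lowerWord α ρ) d n).count true : ℤ) = ⌊ρ + ((d + n : ℕ) : ℝ) * α⌋ - ⌊ρ + d * α⌋ := by
  induction n with
  | zero => simp [segment]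
  | succ n ih =>
    rw [segment_add, List.count_append, Nat.cast_add, ih, ← add_assoc,
      floor_succ_eq_add_lowerWord h0 h1,
      show segment (lowerWord α ρ) (d + n) 1 = [lowerWord α ρ (d + n)] from rfl,
      show [lowerWord α ρ (d + n)].count true = (lowerWord α ρ (d + n)).toNat by
        cases lowerWord α ρ (d + n) <;> rfl]
    push_cast
    ring

lemma abs_mul_sub_lt_one_of_count_eq (h0 : 0 ≤ α) (h1 : α < 1) {ρ : ℝ} {d p c F : ℕ}
    (hblk : ∀ j < F, (segment (lowerWord α ρ) (d + j * p) p).count true = c) :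
    |(F : ℝ) * (p * α - c)| < 1 := by
  have hcount : (segment (lowerWord α ρ) d (F * p)).count true = F * c := by
    induction F with
    | zero => simp [segment]
    | succ F ih =>
      rw [add_mul, one_mul, segment_add, List.count_append, ih fun j hj => hblk j (by omega),
        hblk F (by omega), add_mul, one_mul]
  have hfloor : ⌊ρ + ((d + F * p : ℕ) : ℝ) * α - ((F * c : ℕ) : ℤ)⌋ = ⌊ρ + d * α⌋ := by
    rw [Int.floor_sub_intCast, ← hcount, count_segment_lowerWord h0 h1]
    ring
  have := Int.abs_sub_lt_one_of_floor_eq_floor hfloor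
  push_cast at this
  rwa [show (F : ℝ) * (p * α - c) = ρ + (d + F * p) * α - F * c - (ρ + d * α) by ring]

end LowerWord

section AbelianPeriod

variable {α : ℝ}

lemma exists_mul_abs_sub_lt_of_hasAbPeriod (h0 : 0 ≤ α) (h1 : α < 1) {ρ : ℝ} {i L p : ℕ}
    (h : HasAbPeriod (segment (lowerWord α ρ) i L) p) :
    ∃ c : ℕ, ((L : ℝ) + 2 - 2 * p) * |p * α - c| < p := by
  have hp := h.pos
  obtain ⟨d, hd, c, hc⟩ := h.exists_phase
  -- `F` complete blocks of phase `d` fit into the segment, and they cover all but `< 2 p` letters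
  have hdiv := Nat.div_add_mod' (L - d) p
  have hmod := Nat.mod_lt (L - d) hp
  set F := (L - d) / p
  have hLF : (L : ℝ) + 2 - 2 * p ≤ F * p := by
    have : ((L + 2 : ℕ) : ℝ) ≤ ((F * p + 2 * p : ℕ) : ℝ) := by exact_mod_cast (by omega)
    push_cast at this
    linarith
  have hblk : ∀ j < F, (segment (lowerWord α ρ) (i + d + j * p) p).count true = c := by
    intro j hj
    have : (j + 1) * p ≤ F * p := Nat.mul_le_mul_right _ hj
    rw [add_mul, one_mul] at this
    rw [add_assoc, ← take_drop_segment (L := L) (by omega)]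
    exact hc j (by rw [length_segment, add_mul, one_mul]; omega)
  refine ⟨c, ?_⟩
  have hpR : (0 : ℝ) < p := by exact_mod_cast hp
  calc ((L : ℝ) + 2 - 2 * p) * |p * α - c| ≤ F * p * |p * α - c| := by gcongr
    _ = p * |(F : ℝ) * (p * α - c)| := by rw [abs_mul, Nat.abs_cast]; ring
    _ < p * 1 := by gcongr; exact abs_mul_sub_lt_one_of_count_eq h0 h1 hblk
    _ = p := mul_one _

lemma qd_le_of_hasAbPeriod (hirr : Irrational α) (h0 : 0 < α) (h2 : α < 1 / 2) {ρ : ℝ}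
    {i L p K : ℕ} (hL : qd α (K + 2) * qd α (K + 1) ≤ L)
    (h : HasAbPeriod (segment (lowerWord α ρ) i L) p) : qd α (K + 1) ≤ p := by
  by_contra! hlt
  obtain ⟨c, hc⟩ := exists_mul_abs_sub_lt_of_hasAbPeriod h0.le (by linarith) h
  have hle := le_mul_abs_sub hirr h0 h2 c h.pos hlt
  have hLR : (qd α (K + 2) * qd α (K + 1) : ℝ) ≤ L := by exact_mod_cast hL
  push_cast at hle
  nlinarith [abs_nonneg (p * α - c)]

end AbelianPeriod

lemma exists_forall_floor_add_mul_eq_zero {N : ℕ} {r : ℝ} (h : N * |r| < 1) :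
    ∃ ρ : ℝ, 0 ≤ ρ ∧ ρ < 1 ∧ ∀ j ≤ N, ⌊ρ + j * r⌋ = 0 := by
  rcases le_or_gt 0 r with hr | hr
  · refine ⟨0, le_rfl, one_pos, fun j hj => Int.floor_eq_zero_iff.mpr ⟨by positivity, ?_⟩⟩
    rw [abs_of_nonneg hr] at h
    have : (j : ℝ) ≤ N := by exact_mod_cast hj
    nlinarith
  · rw [abs_of_neg hr] at h
    refine ⟨N * -r, by nlinarith [N.cast_nonneg (α := ℝ)], h, fun j hj => ?_⟩
    have : (j : ℝ) ≤ N := by exact_mod_cast hj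
    exact Int.floor_eq_zero_iff.mpr ⟨by nlinarith, by nlinarith [j.cast_nonneg (α := ℝ)]⟩

section Witness

variable {α : ℝ}

lemma isAbelianPower_segment_lowerWord (hirr : Irrational α) (h0 : 0 < α) (h2 : α < 1 / 2)
    {k : ℕ} {ρ : ℝ} (hρ : ∀ j ≤ qd α (k + 1), ⌊ρ + j * err α k⌋ = 0) :
    IsAbelianPower (qd α k) (qd α (k + 1)) (segment (lowerWord α ρ) 0 (qd α (k + 1) * qd α k)) := by
  set q := qd α k
  set Q := qd α (k + 1)
  have hfloor : ∀ j ≤ Q, ⌊ρ + ((j * q : ℕ) : ℝ) * α⌋ = j * pn α k := by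
    intro j hj
    rw [show ρ + ((j * q : ℕ) : ℝ) * α = ((j * pn α k : ℤ) : ℝ) + (ρ + j * err α k) by
      push_cast [err]; ring, Int.floor_intCast_add, hρ j hj, add_zero]
  have hblock : ∀ i < Q, ((segment (lowerWord α ρ) 0 (Q * q)).drop (i * q)).take q =
      segment (lowerWord α ρ) (i * q) q := by
    intro i hi
    rw [take_drop_segment, zero_add]
    have := Nat.mul_le_mul_right q hi
    rw [Nat.succ_mul] at this
    exact this
  have hcount : ∀ i < Q, ((segment (lowerWord α ρ) (i * q) q).count true : ℤ) = pn α k := by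
    intro i hi
    rw [count_segment_lowerWord h0.le (by linarith), show i * q + q = (i + 1) * q by ring,
      hfloor (i + 1) hi, hfloor i hi.le]
    push_cast
    ring
  refine ⟨qd_pos hirr k, (qd_lt_qd_succ hirr h0 h2 k).trans_le' (qd_pos hirr k), by simp, ?_⟩
  intro i hi j hj
  rw [hblock i hi, hblock j hj]
  exact ⟨by simp, by exact_mod_cast (hcount i hi).trans (hcount j hj).symm⟩

end Witness

theorem convergent_denominator_is_minimum_abelian_period
    (α : ℝ) (hirr : Irrational α) (h0 : 0 < α) (h2 : α < 1 / 2) (k : ℕ) :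
    ∃ w : List Bool, w ≠ [] ∧ IsFactor α w ∧ MinAbPeriod w (qd α k) := by
  obtain ⟨ρ, hρ0, hρ1, hρ⟩ :=
    exists_forall_floor_add_mul_eq_zero (qd_succ_mul_abs_err_lt_one hirr h0 (by linarith) k)
  refine ⟨segment (lowerWord α ρ) 0 (qd α (k + 1) * qd α k), ?_,
    ⟨_, ⟨ρ, hρ0, hρ1, Or.inl rfl⟩, factorOf_segment 0 _⟩,
    ⟨_, _, isAbelianPower_segment_lowerWord hirr h0 h2 hρ, List.infix_refl _⟩, fun p hp => ?_⟩
  · rw [← List.length_pos_iff, length_segment]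
    exact Nat.mul_pos (qd_pos hirr _) (qd_pos hirr _)
  · cases k with
    | zero => exact hp.pos
    | succ K => exact qd_le_of_hasAbPeriod hirr h0 h2 le_rfl hp

end SturmianAbelian
end
end

section
/- Let α be an irrational real number with 0 < α < 1/2 and let m be a positive integer. Then for every integer e ≥ 2, there exists a factor of slope α that is an abelian power of period m and exponent e if and only if e ≤ ⌊1/‖mα‖⌋. -/
open scoped Classical

noncomputable section

namespace SturmianAbelian

/-!
In a Sturmian word of slope `α` the factor of length `n` starting at `a` contains
`⌊ρ + (a + n)α⌋ - ⌊ρ + aα⌋` letters `1` (ceilings in the upper convention), which is within `1`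
of `nα`. If `e` consecutive blocks of length `m` each contain `d` ones, the whole factor contains
`ed` of them, so `|e·mα - ed| < 1` and `e‖mα‖ < 1`. Conversely, if `e‖mα‖ < 1`, write
`mα = r + δ` with `r` the nearest integer; an intercept `ρ` with `ρ + jδ ∈ [0, 1)` for `0 ≤ j ≤ e`
gives `⌊ρ + jmα⌋ = jr`, so the first `e` blocks of the lower word all contain `r` ones. Since `mα`
is irrational, `e‖mα‖ < 1` is the same as `e ≤ ⌊1/‖mα‖⌋`.
-/

lemma nint_eq_abs_sub_round (x : ℝ) : nint x = |x - round x| :=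
  (abs_sub_round_eq_min x).symm

lemma irrational_nint {x : ℝ} (hx : Irrational x) : Irrational (nint x) := by
  rw [nint_eq_abs_sub_round]
  rcases abs_choice (x - round x) with h | h <;> rw [h]
  · exact hx.sub_intCast _
  · exact (hx.sub_intCast _).neg

lemma nint_pos {x : ℝ} (hx : Irrational x) : 0 < nint x := by
  rw [nint_eq_abs_sub_round]
  exact abs_pos.mpr (hx.sub_intCast _).ne_zero

lemma natCast_le_floor_one_div_iff {x : ℝ} (hx : Irrational x) (hx0 : 0 < x) (e : ℕ) :
    (e : ℤ) ≤ ⌊1 / x⌋ ↔ e * x < 1 := by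
  have hne : (e : ℝ) * x ≠ 1 := fun h =>
    hx.ne_rat (e : ℚ)⁻¹ (by push_cast; exact eq_inv_of_mul_eq_one_right h)
  rw [Int.le_floor, Int.cast_natCast, le_div_iff₀ hx0, ← Ne.le_iff_lt hne]

def blockCount (s : ℕ → Bool) (a n : ℕ) : ℕ :=
  ((List.range n).map fun l => s (a + l)).count true

lemma blockCount_succ (s : ℕ → Bool) (a n : ℕ) :
    blockCount s a (n + 1) = blockCount s a n + (s (a + n)).toNat := by
  cases h : s (a + n) <;> simp [blockCount, List.range_succ, h]

lemma blockCount_add (s : ℕ → Bool) (a n k : ℕ) :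
    blockCount s a (n + k) = blockCount s a n + blockCount s (a + n) k := by
  induction k with
  | zero => simp [blockCount]
  | succ k ih => rw [← add_assoc, blockCount_succ, ih, blockCount_succ, add_assoc, add_assoc]

lemma blockCount_mul_of_forall_eq {s : ℕ → Bool} {a m d : ℕ} (e : ℕ)
    (h : ∀ j < e, blockCount s (a + j * m) m = d) : blockCount s a (e * m) = e * d := by
  induction e with
  | zero => simp [blockCount]
  | succ e ih =>
    rw [Nat.succ_mul, blockCount_add, ih fun j hj => h j (by omega), h e (by omega), Nat.succ_mul]

lemma take_drop_map_range (s : ℕ → Bool) {i e m j : ℕ} (hj : j < e) :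
    (((List.range (e * m)).map fun l => s (i + l)).drop (j * m)).take m =
      (List.range m).map fun l => s (i + j * m + l) := by
  have : j * m + m ≤ e * m := by nlinarith
  apply List.ext_getElem
  · simp; omega
  · intro n _ _
    simp [add_assoc]

lemma isAbelianPower_map_range_iff (s : ℕ → Bool) (i : ℕ) {m e : ℕ} (hm : 1 ≤ m) (he : 2 ≤ e) :
    IsAbelianPower m e ((List.range (e * m)).map fun l => s (i + l)) ↔
      ∀ j < e, blockCount s (i + j * m) m = blockCount s i m := by
  constructor
  · rintro ⟨-, -, -, hab⟩ j hj
    have := (hab j hj 0 (by omega)).2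
    rw [take_drop_map_range s hj, take_drop_map_range s (by omega : 0 < e)] at this
    simpa only [blockCount, zero_mul, add_zero] using this
  · refine fun h => ⟨hm, he, by simp, fun j hj k hk => ?_⟩
    rw [take_drop_map_range s hj, take_drop_map_range s hk]
    exact ⟨by simp, (h j hj).trans (h k hk).symm⟩

lemma floor_add_sub_floor {α : ℝ} (h0 : 0 ≤ α) (h1 : α ≤ 1) (x : ℝ) :
    ⌊x + α⌋ - ⌊x⌋ = if 1 - α ≤ Int.fract x then 1 else 0 := by
  rw [show x + α = ⌊x⌋ + (Int.fract x + α) by rw [← add_assoc, Int.floor_add_fract],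
    Int.floor_intCast_add, add_sub_cancel_left]
  have := Int.fract_nonneg x
  have := Int.fract_lt_one x
  split_ifs with h <;> rw [Int.floor_eq_iff] <;> constructor <;> push_cast <;> linarith

lemma ceil_add_sub_ceil {α : ℝ} (h0 : 0 ≤ α) (h1 : α ≤ 1) (x : ℝ) :
    ⌈x + α⌉ - ⌈x⌉ = if 1 - α < fract' x then 1 else 0 := by
  have hx : fract' x = x + 1 - ⌈x⌉ := by
    rw [fract', Int.fract, Int.floor_neg]; push_cast; ring
  have := Int.le_ceil x
  have := Int.ceil_lt_add_one x
  rw [hx]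
  split_ifs with h
  · rw [sub_eq_iff_eq_add', Int.ceil_eq_iff]; push_cast; constructor <;> linarith
  · rw [sub_eq_zero, Int.ceil_eq_iff]; constructor <;> linarith [Int.ceil_le_floor_add_one x]

lemma abs_floor_sub_floor_sub_lt_one (x y : ℝ) : |((⌊x⌋ - ⌊y⌋ : ℤ) : ℝ) - (x - y)| < 1 := by
  rw [abs_sub_lt_iff]; push_cast
  constructor <;>
    linarith [Int.floor_le x, Int.floor_le y, Int.lt_floor_add_one x, Int.lt_floor_add_one y]

lemma abs_ceil_sub_ceil_sub_lt_one (x y : ℝ) : |((⌈x⌉ - ⌈y⌉ : ℤ) : ℝ) - (x - y)| < 1 := by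
  rw [abs_sub_lt_iff]; push_cast
  constructor <;>
    linarith [Int.le_ceil x, Int.le_ceil y, Int.ceil_lt_add_one x, Int.ceil_lt_add_one y]

lemma blockCount_lowerWord {α : ℝ} (h0 : 0 ≤ α) (h1 : α ≤ 1) (ρ : ℝ) (a n : ℕ) :
    (blockCount (lowerWord α ρ) a n : ℤ) = ⌊ρ + ↑(a + n) * α⌋ - ⌊ρ + ↑a * α⌋ := by
  induction n with
  | zero => simp [blockCount]
  | succ n ih =>
    have step := floor_add_sub_floor h0 h1 (ρ + ↑(a + n) * α)
    rw [blockCount_succ, Nat.cast_add, ih, ← add_assoc, Nat.cast_succ, add_one_mul, ← add_assoc,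
      lowerWord]
    split_ifs at step ⊢ <;>
      simp only [Bool.toNat_true, Bool.toNat_false, Nat.cast_one, Nat.cast_zero] <;> omega

lemma blockCount_upperWord {α : ℝ} (h0 : 0 ≤ α) (h1 : α ≤ 1) (ρ : ℝ) (a n : ℕ) :
    (blockCount (upperWord α ρ) a n : ℤ) = ⌈ρ + ↑(a + n) * α⌉ - ⌈ρ + ↑a * α⌉ := by
  induction n with
  | zero => simp [blockCount]
  | succ n ih =>
    have step := ceil_add_sub_ceil h0 h1 (ρ + ↑(a + n) * α)
    rw [blockCount_succ, Nat.cast_add, ih, ← add_assoc, Nat.cast_succ, add_one_mul, ← add_assoc,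
      upperWord]
    split_ifs at step ⊢ <;>
      simp only [Bool.toNat_true, Bool.toNat_false, Nat.cast_one, Nat.cast_zero] <;> omega

lemma IsSturmian.abs_blockCount_sub_lt_one {α : ℝ} (h0 : 0 ≤ α) (h1 : α ≤ 1) {s : ℕ → Bool}
    (hs : IsSturmian α s) (a n : ℕ) :
    |(blockCount s a n : ℝ) - n * α| < 1 := by
  obtain ⟨ρ, -, -, rfl | rfl⟩ := hs
  · have := abs_floor_sub_floor_sub_lt_one (ρ + ↑(a + n) * α) (ρ + ↑a * α)
    rw [← blockCount_lowerWord h0 h1] at this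
    convert this using 3 <;> push_cast <;> ring
  · have := abs_ceil_sub_ceil_sub_lt_one (ρ + ↑(a + n) * α) (ρ + ↑a * α)
    rw [← blockCount_upperWord h0 h1] at this
    convert this using 3 <;> push_cast <;> ring

lemma IsSturmian.mul_nint_lt_one {α : ℝ} (h0 : 0 ≤ α) (h1 : α ≤ 1) {s : ℕ → Bool}
    (hs : IsSturmian α s) {i m e : ℕ}
    (h : ∀ j < e, blockCount s (i + j * m) m = blockCount s i m) : e * nint (m * α) < 1 := by
  set d := blockCount s i m
  have hbalance := IsSturmian.abs_blockCount_sub_lt_one h0 h1 hs i (e * m)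
  rw [blockCount_mul_of_forall_eq e h] at hbalance
  calc (e : ℝ) * nint (m * α) ≤ e * |m * α - (d : ℤ)| := by
        gcongr; rw [nint_eq_abs_sub_round]; exact round_le _ _
    _ = |(↑(e * d) : ℝ) - ↑(e * m) * α| := by
        rw [abs_sub_comm, ← abs_of_nonneg (Nat.cast_nonneg (α := ℝ) e), ← abs_mul]
        push_cast; ring_nf
    _ < 1 := hbalance

lemma exists_floor_add_mul_eq {β : ℝ} {e : ℕ} (h : e * nint β < 1) :
    ∃ ρ : ℝ, 0 ≤ ρ ∧ ρ < 1 ∧ ∀ j ≤ e, ⌊ρ + j * β⌋ = j * round β := by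
  set δ := β - round β
  have hδ : e * |δ| < 1 := by rwa [← nint_eq_abs_sub_round]
  suffices ∃ ρ : ℝ, 0 ≤ ρ ∧ ρ < 1 ∧ ∀ j ≤ e, 0 ≤ ρ + j * δ ∧ ρ + j * δ < 1 by
    obtain ⟨ρ, hρ0, hρ1, hρδ⟩ := this
    refine ⟨ρ, hρ0, hρ1, fun j hj => ?_⟩
    rw [Int.floor_eq_iff]; push_cast
    obtain ⟨hlo, hhi⟩ := hρδ j hj
    constructor <;> linarith [show β = round β + δ by ring]
  have he : (0 : ℝ) ≤ e := Nat.cast_nonneg e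
  rcases le_or_gt 0 δ with hδ0 | hδ0
  · rw [abs_of_nonneg hδ0] at hδ
    refine ⟨0, le_rfl, one_pos, fun j hj => ?_⟩
    have hj : (j : ℝ) ≤ e := by exact_mod_cast hj
    constructor <;> nlinarith [Nat.cast_nonneg (α := ℝ) j]
  · rw [abs_of_neg hδ0] at hδ
    refine ⟨-(e * δ), by nlinarith, by linarith, fun j hj => ?_⟩
    have hj : (j : ℝ) ≤ e := by exact_mod_cast hj
    constructor <;> nlinarith [Nat.cast_nonneg (α := ℝ) j]

lemma exists_lowerWord_blockCount_eq {α : ℝ} (h0 : 0 ≤ α) (h1 : α ≤ 1) {m e : ℕ}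
    (h : e * nint (m * α) < 1) :
    ∃ ρ : ℝ, 0 ≤ ρ ∧ ρ < 1 ∧
      ∀ j < e, blockCount (lowerWord α ρ) (j * m) m = blockCount (lowerWord α ρ) 0 m := by
  obtain ⟨ρ, hρ0, hρ1, hfloor⟩ := exists_floor_add_mul_eq h
  have hblock : ∀ j < e, (blockCount (lowerWord α ρ) (j * m) m : ℤ) = round (m * α) := by
    intro j hj
    rw [blockCount_lowerWord h0 h1, ← Nat.succ_mul]
    push_cast
    have := hfloor (j + 1) hj
    push_cast at this
    rw [mul_assoc, mul_assoc, hfloor j hj.le, this]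
    ring
  refine ⟨ρ, hρ0, hρ1, fun j hj => ?_⟩
  have := (hblock j hj).trans (hblock 0 (by omega)).symm
  simpa using this

theorem abelian_power_exponent_formula
    (α : ℝ) (hirr : Irrational α) (h0 : 0 < α) (h2 : α < 1 / 2)
    (m : ℕ) (hm : 0 < m) :
    ∀ e : ℕ, 2 ≤ e →
      ((∃ u : List Bool, IsFactor α u ∧ IsAbelianPower m e u) ↔
        (e : ℤ) ≤ ⌊1 / nint ((m : ℝ) * α)⌋) := by
  intro e he
  have hmα : Irrational (m * α) := hirr.natCast_mul hm.ne'
  have h1 : α ≤ 1 := by linarith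
  rw [natCast_le_floor_one_div_iff (irrational_nint hmα) (nint_pos hmα)]
  constructor
  · rintro ⟨u, ⟨s, hs, i, hu⟩, hpow⟩
    rw [hpow.2.2.1] at hu
    rw [hu, isAbelianPower_map_range_iff s i hm he] at hpow
    exact hs.mul_nint_lt_one h0.le h1 hpow
  · intro h
    obtain ⟨ρ, hρ0, hρ1, hblocks⟩ := exists_lowerWord_blockCount_eq h0.le h1 h
    exact ⟨(List.range (e * m)).map fun l => lowerWord α ρ (0 + l),
      ⟨lowerWord α ρ, ⟨ρ, hρ0, hρ1, .inl rfl⟩, 0, by simp⟩,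
      (isAbelianPower_map_range_iff _ 0 hm he).2 (by simpa using hblocks)⟩

end SturmianAbelian
end
end
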